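/- arXiv:0710.3654 — 3 statements merged into one kernel-verified Lean document; each statement's English description precedes it below -/
import Mathlib

section
/- Let Z_d be a chi-square random variable with d degrees of freedom (d a positive integer). Then for all x > 0, P(Z_d - d ≥ x·√(2d)) ≤ exp(-x²/(2·(1 + x·√(2/d)))). -/
/-!
Chernoff bound: for `0 ≤ t < 1/2` a standard Gaussian `W` has `𝔼 exp (t W²) = (1 - 2t)^(-1/2)`,
so `P(Z_d ≥ d + s) ≤ exp (-t (d + s)) (1 - 2t)^(-d/2)`. The minimizing choice `t = s / (2 (d + s))`
gives `exp (-s/2 + (d/2) log (1 + s/d))`, and `log y ≤ sinh (log y) = (y - y⁻¹)/2` for `y ≥ 1`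
bounds this by `exp (-s² / (4 (d + s)))`, which is the claim for `s = x √(2d)`.
-/

open MeasureTheory ProbabilityTheory Real

theorem Real.log_le_sub_inv_div_two {x : ℝ} (hx : 1 ≤ x) : log x ≤ (x - x⁻¹) / 2 := by
  rw [← sinh_log (by linarith)]
  exact self_le_sinh_iff.mpr (log_nonneg hx)

lemma neg_half_add_mul_log_le {n s : ℝ} (hn : 0 < n) (hs : 0 ≤ s) :
    -s / 2 + n / 2 * log ((n + s) / n) ≤ -s ^ 2 / (4 * (n + s)) := by
  have hlog := log_le_sub_inv_div_two ((one_le_div hn).mpr (by linarith : n ≤ n + s))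
  calc -s / 2 + n / 2 * log ((n + s) / n)
      ≤ -s / 2 + n / 2 * (((n + s) / n - ((n + s) / n)⁻¹) / 2) := by gcongr
    _ = -s ^ 2 / (4 * (n + s)) := by field_simp; ring

lemma mgf_sq_gaussianReal {t : ℝ} (ht : t < 1 / 2) :
    mgf (fun x => x ^ 2) (gaussianReal 0 1) t = (√(1 - 2 * t))⁻¹ := by
  have hdensity : ∀ x, gaussianPDFReal 0 1 x • exp (t * x ^ 2)
      = (√(2 * π))⁻¹ * exp (-(1 / 2 - t) * x ^ 2) := fun x => by
    simp only [gaussianPDFReal, NNReal.coe_one, mul_one, sub_zero, smul_eq_mul]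
    rw [mul_assoc, ← exp_add]
    ring_nf
  rw [mgf, integral_gaussianReal_eq_integral_smul one_ne_zero]
  simp_rw [hdensity]
  have h2t : 0 < 1 - 2 * t := by linarith
  rw [integral_const_mul, integral_gaussian, show π / (1 / 2 - t) = 2 * π * (1 - 2 * t)⁻¹ by
    field_simp, sqrt_mul' _ (inv_nonneg.mpr h2t.le), sqrt_inv, ← mul_assoc,
    inv_mul_cancel₀ (by positivity), one_mul]

section

variable {Ω : Type*} [MeasurableSpace Ω] {μ : Measure Ω}

lemma mgf_sq_of_map_eq_gaussianReal {X : Ω → ℝ} (hX : μ.map X = gaussianReal 0 1) {t : ℝ}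
    (ht : t < 1 / 2) : mgf (fun ω => X ω ^ 2) μ t = (√(1 - 2 * t))⁻¹ := by
  have hXm : AEMeasurable X μ := .of_map_ne_zero (hX ▸ IsProbabilityMeasure.ne_zero _)
  rw [← mgf_sq_gaussianReal ht, ← hX, mgf_map hXm (by fun_prop)]
  rfl

variable {ι : Type*} [Fintype ι] {W : ι → Ω → ℝ}

lemma mgf_sum_sq_of_iIndepFun (hindep : iIndepFun W μ)
    (hgauss : ∀ i, μ.map (W i) = gaussianReal 0 1) {t : ℝ} (ht : t < 1 / 2) :
    mgf (fun ω => ∑ i, W i ω ^ 2) μ t = (√(1 - 2 * t))⁻¹ ^ Fintype.card ι := by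
  have hsq : iIndepFun (fun i ω => W i ω ^ 2) μ :=
    hindep.comp (fun _ y => y ^ 2) (fun _ => by fun_prop)
  have hmeas : ∀ i, AEMeasurable (fun ω => W i ω ^ 2) μ := fun i =>
    (AEMeasurable.of_map_ne_zero (hgauss i ▸ IsProbabilityMeasure.ne_zero _)).pow_const 2
  have := hsq.mgf_sum₀ hmeas Finset.univ (t := t)
  simp only [Finset.sum_fn] at this
  rw [this, Finset.prod_congr rfl fun i _ => mgf_sq_of_map_eq_gaussianReal (hgauss i) ht,
    Finset.prod_const, Finset.card_univ]

lemma measureReal_sum_sq_ge_le_exp [IsProbabilityMeasure μ] (hindep : iIndepFun W μ)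
    (hgauss : ∀ i, μ.map (W i) = gaussianReal 0 1) {t : ℝ} (ht₀ : 0 ≤ t) (ht : t < 1 / 2)
    (ε : ℝ) :
    μ.real {ω | ε ≤ ∑ i, W i ω ^ 2} ≤ exp (-t * ε) * (√(1 - 2 * t))⁻¹ ^ Fintype.card ι := by
  have hmgf := mgf_sum_sq_of_iIndepFun hindep hgauss ht
  have hint : Integrable (fun ω => exp (t * ∑ i, W i ω ^ 2)) μ := by
    rw [← mgf_pos_iff, hmgf]
    have : 0 < 1 - 2 * t := by linarith
    positivity
  exact hmgf ▸ measure_ge_le_exp_mul_mgf ε ht₀ hint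

theorem measureReal_sum_sq_ge_le [IsProbabilityMeasure μ] [Nonempty ι] (hindep : iIndepFun W μ)
    (hgauss : ∀ i, μ.map (W i) = gaussianReal 0 1) {s : ℝ} (hs : 0 ≤ s) :
    μ.real {ω | Fintype.card ι + s ≤ ∑ i, W i ω ^ 2}
      ≤ exp (-s ^ 2 / (4 * (Fintype.card ι + s))) := by
  set n : ℝ := (Fintype.card ι : ℝ) with hn_def
  have hn : 0 < n := by positivity
  set t := s / (2 * (n + s)) with ht_def
  have h2t : 1 - 2 * t = n / (n + s) := by rw [ht_def]; field_simp; ring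
  have hchernoff := measureReal_sum_sq_ge_le_exp hindep hgauss (t := t) (by positivity)
    (by rw [div_lt_iff₀ (by positivity)]; linarith) (n + s)
  refine hchernoff.trans (le_of_eq_of_le ?_ (exp_le_exp.mpr (neg_half_add_mul_log_le hn hs)))
  rw [exp_add, h2t, ← sqrt_inv, inv_div, sqrt_eq_rpow, ← rpow_natCast, ← rpow_mul (by positivity),
    rpow_def_of_pos (by positivity)]
  congr 1
  · congr 1; rw [ht_def]; field_simp
  · congr 1; rw [← hn_def]; ring

end

theorem stmt_4_general {Ω : Type*} [MeasureSpace Ω] [IsProbabilityMeasure (ℙ : Measure Ω)]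
    (d : ℕ) (hd : 1 ≤ d) (W : Fin d → Ω → ℝ)
    (hindep : iIndepFun W ℙ)
    (hgauss : ∀ i, Measure.map (W i) ℙ = gaussianReal 0 1)
    (x : ℝ) (hx : 0 < x) :
    (ℙ {ω | x * Real.sqrt (2 * d) ≤ (∑ i, (W i ω) ^ 2) - d}).toReal
      ≤ Real.exp (-(x ^ 2) / (2 * (1 + x * Real.sqrt (2 / d)))) := by
  have : Nonempty (Fin d) := ⟨⟨0, hd⟩⟩
  have hd₀ : (0 : ℝ) < d := by positivity
  set s := x * √(2 * d) with hs_def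
  have hevent : {ω | s ≤ (∑ i, W i ω ^ 2) - d} = {ω | d + s ≤ ∑ i, W i ω ^ 2} := by
    ext ω
    simp only [Set.mem_ofPred_eq]
    constructor <;> intro h <;> linarith
  have hexponent : -(x ^ 2) / (2 * (1 + x * √(2 / d))) = -s ^ 2 / (4 * (d + s)) := by
    have hsqrt : √(2 / d) = √(2 * d) / d := by
      rw [show (2 : ℝ) / d = 2 * d / d ^ 2 by field_simp, sqrt_div (by positivity),
        sqrt_sq hd₀.le]
    rw [hsqrt, hs_def, mul_pow, sq_sqrt (by positivity)]
    field_simp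
    ring
  have htail := measureReal_sum_sq_ge_le hindep hgauss (by positivity : 0 ≤ s)
  rw [Fintype.card_fin] at htail
  rw [hevent, hexponent]
  exact htail

/-- Chi-square tail bound (Lemma B.2): `Z_d` is realized as the sum of squares of
`d` i.i.d. standard Gaussian random variables. -/
theorem stmt_4 {Ω : Type*} [MeasureSpace Ω] [IsProbabilityMeasure (ℙ : Measure Ω)]
    (d : ℕ) (hd : 1 ≤ d) (W : Fin d → Ω → ℝ)
    (hmeas : ∀ i, Measurable (W i))
    (hindep : iIndepFun W ℙ)
    (hgauss : ∀ i, Measure.map (W i) ℙ = gaussianReal 0 1)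
    (x : ℝ) (hx : 0 < x) :
    (ℙ {ω | x * Real.sqrt (2 * d) ≤ (∑ i, (W i ω) ^ 2) - d}).toReal
      ≤ Real.exp (-(x ^ 2) / (2 * (1 + x * Real.sqrt (2 / d)))) :=
  stmt_4_general d hd W hindep hgauss x hx
end

section
/- Let V₁,...,V_M be random variables such that √n·V_j is N(0, σ²·‖f_j‖_n²)-distributed for each j, where ‖f_j‖_n > 0. Let r_n = 2√2·σ·√((log M + log n)/n) and r_{n,j} = r_n·‖f_j‖_n. Then P(∃ j ≤ M : 2|V_j| > r_{n,j}) ≤ 1/(n·√(π·(log M + log n))), for all integers n ≥ 1 and M ≥ 2. -/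
/-!
Write `L = log M + log n` and `s_j = σ ‖f_j‖_n`. The event `2 |V_j| > r_{n,j}` is the event
`|√n V_j| > √(2L) s_j` for the centred Gaussian `√n V_j` of variance `s_j²`. Integrating
`x φ(x) = -v φ'(x)` for its density `φ` gives Mills' ratio `P(X > a) ≤ (v / a) φ(a)`, so each of
these events has probability at most `e^{-L} / √(πL) = 1 / (M n √(πL))`, and the union bound
over the `M` indices gives the claim.
-/

open MeasureTheory ProbabilityTheory Set Filter Topology
open scoped NNReal

lemma hasDerivAt_gaussianPDFReal (μ : ℝ) (v : ℝ≥0) (x : ℝ) :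
    HasDerivAt (gaussianPDFReal μ v) (-((x - μ) / v) * gaussianPDFReal μ v x) x := by
  have h : HasDerivAt (fun y => (y - μ) ^ 2) (2 * (x - μ)) x := by
    simpa using ((hasDerivAt_id x).sub_const μ).fun_pow 2
  rw [gaussianPDFReal_def]
  refine ((h.fun_neg.div_const (2 * (v : ℝ))).exp.const_mul (√(2 * Real.pi * v))⁻¹).congr_deriv ?_
  ring

lemma tendsto_gaussianPDFReal_atTop (μ : ℝ) (v : ℝ≥0) :
    Tendsto (gaussianPDFReal μ v) atTop (𝓝 0) := by
  rcases eq_zero_or_pos v with rfl | hv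
  · rw [gaussianPDFReal_zero_var]
    exact tendsto_const_nhds
  have h : Tendsto (fun x => -(x - μ) ^ 2 / (2 * v)) atTop atBot := by
    refine (tendsto_div_const_atBot_of_pos (by positivity)).2 ?_
    exact tendsto_neg_atTop_atBot.comp
      ((tendsto_pow_atTop two_ne_zero).comp (tendsto_atTop_add_const_right _ _ tendsto_id))
  rw [gaussianPDFReal_def]
  simpa only [mul_zero, Function.comp_def] using
    (Real.tendsto_exp_atBot.comp h).const_mul (√(2 * Real.pi * v))⁻¹

lemma integrable_mul_gaussianPDFReal {v : ℝ≥0} (hv : v ≠ 0) :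
    Integrable (fun x => x * gaussianPDFReal 0 v x) := by
  have hb : 0 < (2 * (v : ℝ))⁻¹ := by positivity
  convert (integrable_mul_exp_neg_mul_sq hb).const_mul (√(2 * Real.pi * v))⁻¹ using 2 with x
  rw [gaussianPDFReal, sub_zero]
  ring_nf

lemma integral_Ioi_mul_gaussianPDFReal {v : ℝ≥0} (hv : v ≠ 0) (a : ℝ) :
    ∫ x in Ioi a, x * gaussianPDFReal 0 v x = v * gaussianPDFReal 0 v a := by
  have hderiv : ∀ x ∈ Ici a,
      HasDerivAt (fun y => -v * gaussianPDFReal 0 v y) (x * gaussianPDFReal 0 v x) x := by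
    intro x _
    refine ((hasDerivAt_gaussianPDFReal 0 v x).const_mul (-(v : ℝ))).congr_deriv ?_
    field_simp
    ring
  have := integral_Ioi_of_hasDerivAt_of_tendsto' hderiv
    (integrable_mul_gaussianPDFReal hv).integrableOn
    (by simpa using (tendsto_gaussianPDFReal_atTop 0 v).const_mul (-(v : ℝ)))
  rw [this]
  ring

lemma gaussianReal_real_Ioi_le {v : ℝ≥0} (hv : v ≠ 0) {a : ℝ} (ha : 0 < a) :
    (gaussianReal 0 v).real (Ioi a) ≤ v / a * gaussianPDFReal 0 v a := by
  rw [measureReal_def, gaussianReal_apply_eq_integral 0 hv,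
    ENNReal.toReal_ofReal (setIntegral_nonneg measurableSet_Ioi fun x _ =>
      gaussianPDFReal_nonneg _ _ _)]
  have hle : ∀ x ∈ Ioi a, gaussianPDFReal 0 v x ≤ a⁻¹ * (x * gaussianPDFReal 0 v x) := by
    intro x hx
    rw [← mul_assoc, ← div_eq_inv_mul]
    exact le_mul_of_one_le_left (gaussianPDFReal_nonneg _ _ _) ((one_le_div ha).2 (le_of_lt hx))
  calc ∫ x in Ioi a, gaussianPDFReal 0 v x
      ≤ ∫ x in Ioi a, a⁻¹ * (x * gaussianPDFReal 0 v x) :=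
        setIntegral_mono_on (integrable_gaussianPDFReal 0 v).integrableOn
          ((integrable_mul_gaussianPDFReal hv).integrableOn.const_mul _) measurableSet_Ioi hle
    _ = v / a * gaussianPDFReal 0 v a := by
        rw [integral_const_mul, integral_Ioi_mul_gaussianPDFReal hv]
        ring

lemma gaussianReal_real_abs_gt_le {v : ℝ≥0} (hv : v ≠ 0) {a : ℝ} (ha : 0 < a) :
    (gaussianReal 0 v).real {x | a < |x|} ≤ 2 * (v / a * gaussianPDFReal 0 v a) := by
  have hsplit : {x : ℝ | a < |x|} = Iio (-a) ∪ Ioi a := by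
    ext x
    simp only [mem_ofPred_eq, mem_union, mem_Iio, mem_Ioi, lt_abs, lt_neg]
    tauto
  have hsymm : (gaussianReal 0 v).real (Iio (-a)) = (gaussianReal 0 v).real (Ioi a) := by
    have hmap : (gaussianReal 0 v).map (fun x => -x) = gaussianReal 0 v := by
      simpa using gaussianReal_map_neg (μ := 0) (v := v)
    conv_lhs => rw [← hmap]
    rw [map_measureReal_apply measurable_neg measurableSet_Iio, neg_preimage, neg_Iio, neg_neg]
  calc (gaussianReal 0 v).real {x | a < |x|}
      ≤ (gaussianReal 0 v).real (Iio (-a)) + (gaussianReal 0 v).real (Ioi a) := by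
        rw [hsplit]; exact measureReal_union_le _ _
    _ ≤ 2 * (v / a * gaussianPDFReal 0 v a) := by
        rw [hsymm]; linarith [gaussianReal_real_Ioi_le hv ha]

lemma gaussianReal_real_abs_gt_sqrt_two_mul_le (s : ℝ≥0) {L : ℝ} (hL : 0 < L) :
    (gaussianReal 0 (s ^ 2)).real {x | √(2 * L) * s < |x|} ≤ Real.exp (-L) / √(Real.pi * L) := by
  rcases eq_zero_or_pos s with rfl | hs
  · simp [gaussianReal_zero_var, measureReal_def]
    positivity
  have hsL : 0 < √(2 * L) * s := by positivity
  refine (gaussianReal_real_abs_gt_le (by positivity) hsL).trans_eq ?_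
  have hexp : -(√(2 * L) * s - 0) ^ 2 / (2 * ((s ^ 2 : ℝ≥0) : ℝ)) = -L := by
    rw [sub_zero, mul_pow, Real.sq_sqrt (by positivity)]
    push_cast
    field_simp
  have hvar : √(2 * Real.pi * ((s ^ 2 : ℝ≥0) : ℝ)) = √(2 * Real.pi) * s := by
    push_cast
    rw [Real.sqrt_mul (by positivity), Real.sqrt_sq (by positivity)]
  have hnorm : √(Real.pi * L) = √(2 * Real.pi) * √(2 * L) / 2 := by
    rw [← Real.sqrt_mul (by positivity), show 2 * Real.pi * (2 * L) = 2 ^ 2 * (Real.pi * L) by ring,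
      Real.sqrt_mul (sq_nonneg 2), Real.sqrt_sq zero_le_two]
    ring
  rw [gaussianPDFReal, hexp, hvar, hnorm, NNReal.coe_pow]
  have hA : 0 < √(2 * Real.pi) := by positivity
  have hB : 0 < √(2 * L) := by positivity
  field_simp

lemma measureReal_abs_gt_le_of_map_eq_gaussianReal {Ω : Type*} [MeasurableSpace Ω]
    {μ : Measure Ω} {X : Ω → ℝ} {s : ℝ≥0} (hX : μ.map X = gaussianReal 0 (s ^ 2))
    {L : ℝ} (hL : 0 < L) :
    μ.real {ω | √(2 * L) * s < |X ω|} ≤ Real.exp (-L) / √(Real.pi * L) := by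
  have hXmeas : AEMeasurable X μ :=
    AEMeasurable.of_map_ne_zero (by rw [hX]; exact IsProbabilityMeasure.ne_zero _)
  calc μ.real {ω | √(2 * L) * s < |X ω|}
      = (μ.map X).real {x | √(2 * L) * s < |x|} :=
        (map_measureReal_apply_of_aemeasurable hXmeas
          (measurableSet_lt measurable_const measurable_abs)).symm
    _ ≤ Real.exp (-L) / √(Real.pi * L) := hX ▸ gaussianReal_real_abs_gt_sqrt_two_mul_le s hL

theorem stmt_7_general {Ω : Type*} [MeasureSpace Ω]
    (n M : ℕ) (hn : 1 ≤ n) (hM : 2 ≤ M) (σ : ℝ≥0)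
    (V : Fin M → Ω → ℝ)
    (c : Fin M → ℝ≥0)
    (hgauss : ∀ j, Measure.map (fun ω => Real.sqrt n * V j ω) ℙ
      = gaussianReal 0 (σ ^ 2 * (c j) ^ 2)) :
    (ℙ {ω | ∃ j, (2 * Real.sqrt 2 * σ * Real.sqrt ((Real.log M + Real.log n) / n))
          * (c j) < 2 * |V j ω|}).toReal
      ≤ 1 / (n * Real.sqrt (Real.pi * (Real.log M + Real.log n))) := by
  set L := Real.log M + Real.log n
  have hn₀ : (0 : ℝ) < n := by exact_mod_cast hn
  have hL : 0 < L := add_pos_of_pos_of_nonneg (Real.log_pos (by exact_mod_cast hM))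
    (Real.log_nonneg (by exact_mod_cast hn))
  have hevent : {ω | ∃ j, 2 * √2 * σ * √(L / n) * c j < 2 * |V j ω|}
      = ⋃ j, {ω | √(2 * L) * (σ * c j) < |√n * V j ω|} := by
    ext ω
    simp only [mem_ofPred_eq, mem_iUnion]
    refine exists_congr fun j => ?_
    have hsn : 0 < √(n : ℝ) := by positivity
    rw [abs_mul, abs_of_pos hsn, Real.sqrt_div' _ hn₀.le, Real.sqrt_mul zero_le_two,
      show 2 * √2 * σ * (√L / √n) * c j = 2 * (√2 * √L * (σ * c j)) / √n by ring,
      div_lt_iff₀ hsn]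
    constructor <;> intro h <;> linarith
  have hexp : Real.exp (-L) = 1 / (M * n) := by
    rw [Real.exp_neg, Real.exp_add, Real.exp_log (by positivity), Real.exp_log hn₀, one_div]
  calc (ℙ : Measure Ω).real {ω | ∃ j, 2 * √2 * σ * √(L / n) * c j < 2 * |V j ω|}
      ≤ ∑ j, (ℙ : Measure Ω).real {ω | √(2 * L) * (σ * c j) < |√n * V j ω|} := by
        rw [hevent]; exact measureReal_iUnion_fintype_le _
    _ ≤ ∑ _j : Fin M, Real.exp (-L) / √(Real.pi * L) := Finset.sum_le_sum fun j _ =>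
        measureReal_abs_gt_le_of_map_eq_gaussianReal (by rw [hgauss j, mul_pow]) hL
    _ = 1 / (n * √(Real.pi * L)) := by
        rw [Finset.sum_const, Finset.card_univ, Fintype.card_fin, nsmul_eq_mul, hexp]
        field_simp

/-- Union bound with Gaussian tails (proof of (A.2)): if `√n · V_j ~ N(0, σ²‖f_j‖_n²)`
then the probability that some `2|V_j|` exceeds `r_{n,j} = r_n ‖f_j‖_n` with
`r_n = 2√2 σ √((log M + log n)/n)` is at most `1/(n√(π(log M + log n)))`. -/
theorem stmt_7 {Ω : Type*} [MeasureSpace Ω] [IsProbabilityMeasure (ℙ : Measure Ω)]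
    (n M : ℕ) (hn : 1 ≤ n) (hM : 2 ≤ M) (σ : ℝ≥0) (hσ : 0 < σ)
    (V : Fin M → Ω → ℝ) (hmeas : ∀ j, Measurable (V j))
    (c : Fin M → ℝ≥0) (hc : ∀ j, 0 < c j)
    (hgauss : ∀ j, Measure.map (fun ω => Real.sqrt n * V j ω) ℙ
      = gaussianReal 0 (σ ^ 2 * (c j) ^ 2)) :
    (ℙ {ω | ∃ j, (2 * Real.sqrt 2 * σ * Real.sqrt ((Real.log M + Real.log n) / n))
          * (c j) < 2 * |V j ω|}).toReal
      ≤ 1 / (n * Real.sqrt (Real.pi * (Real.log M + Real.log n))) :=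
  stmt_7_general n M hn hM σ V c hgauss
end

section
/- Let f, f₁,...,f_M map a set 𝒳 to ℝ with sup_x |f_j(x)| ≤ L for all j, and let X₁,...,Xₙ ∈ 𝒳. Define ‖g‖_n² = (1/n)Σᵢ g(Xᵢ)² and f_λ = Σ_j λ_j f_j. Let Λ^M = {λ ∈ ℝ^M : λ_j ≥ 0, Σ λ_j ≤ 1} be the simplex, and for an integer m ≥ 1 let 𝒞 be the set of functions of the form (1/m)·Σ_{j=1}^M k_j f_j with k_j nonnegative integers satisfying Σ k_j ≤ m. Then min_{g ∈ 𝒞} ‖g - f‖_n² ≤ min_{λ ∈ Λ^M} ‖f_λ - f‖_n² + L²/m. -/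
open Finset

section MaureyAux

variable {M m : ℕ}

/-- Fubini for products over function types. -/
lemma maurey_sum_prod_pi (g : Fin m → Option (Fin M) → ℝ) :
    ∑ ω : Fin m → Option (Fin M), ∏ t, g t (ω t) = ∏ t, ∑ o, g t o := by
  rw [Finset.prod_univ_sum, Fintype.piFinset_univ]

/-- Expectation of a product of coordinate functions over the product measure. -/
lemma maurey_prod_meas (p : Option (Fin M) → ℝ) (hp1 : ∑ o, p o = 1)
    (S : Finset (Fin m)) (g : Fin m → Option (Fin M) → ℝ) :
    ∑ ω : Fin m → Option (Fin M), (∏ t, p (ω t)) * ∏ t ∈ S, g t (ω t)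
      = ∏ t ∈ S, ∑ o, p o * g t o := by
  have h1 : ∀ ω : Fin m → Option (Fin M),
      (∏ t, p (ω t)) * ∏ t ∈ S, g t (ω t)
        = ∏ t, (p (ω t) * if t ∈ S then g t (ω t) else 1) := by
    intro ω
    rw [Finset.prod_mul_distrib]
    congr 1
    rw [Finset.prod_ite_mem, Finset.univ_inter]
  calc ∑ ω : Fin m → Option (Fin M), (∏ t, p (ω t)) * ∏ t ∈ S, g t (ω t)
      = ∑ ω : Fin m → Option (Fin M), ∏ t, (p (ω t) * if t ∈ S then g t (ω t) else 1) :=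
        Finset.sum_congr rfl (fun ω _ => h1 ω)
    _ = ∏ t, ∑ o, (p o * if t ∈ S then g t o else 1) :=
        maurey_sum_prod_pi (fun t o => p o * if t ∈ S then g t o else 1)
    _ = ∏ t, (if t ∈ S then ∑ o, p o * g t o else 1) := by
        refine Finset.prod_congr rfl (fun t _ => ?_)
        by_cases ht : t ∈ S <;> simp [ht, hp1]
    _ = ∏ t ∈ S, ∑ o, p o * g t o := by
        rw [Finset.prod_ite_mem, Finset.univ_inter]

/-- Total mass of the product measure is 1. -/
lemma maurey_mass (p : Option (Fin M) → ℝ) (hp1 : ∑ o, p o = 1) :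
    ∑ ω : Fin m → Option (Fin M), (∏ t, p (ω t)) = 1 := by
  have := maurey_prod_meas (m := m) p hp1 ∅ (fun _ _ => 1)
  simpa using this

/-- First moment of a single coordinate. -/
lemma maurey_E1 (p : Option (Fin M) → ℝ) (hp1 : ∑ o, p o = 1)
    (t₀ : Fin m) (g : Option (Fin M) → ℝ) :
    ∑ ω : Fin m → Option (Fin M), (∏ t, p (ω t)) * g (ω t₀) = ∑ o, p o * g o := by
  have := maurey_prod_meas (m := m) p hp1 {t₀} (fun _ => g)
  simpa using this

/-- Mixed second moment of two distinct coordinates. -/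
lemma maurey_E2 (p : Option (Fin M) → ℝ) (hp1 : ∑ o, p o = 1)
    {s t : Fin m} (hst : s ≠ t) (g : Option (Fin M) → ℝ) :
    ∑ ω : Fin m → Option (Fin M), (∏ u, p (ω u)) * (g (ω s) * g (ω t))
      = (∑ o, p o * g o) * (∑ o, p o * g o) := by
  have h := maurey_prod_meas (m := m) p hp1 {s, t} (fun _ => g)
  calc ∑ ω : Fin m → Option (Fin M), (∏ u, p (ω u)) * (g (ω s) * g (ω t))
      = ∑ ω : Fin m → Option (Fin M), (∏ u, p (ω u)) * ∏ u ∈ ({s, t} : Finset (Fin m)),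
          (fun _ => g) u (ω u) := by
        refine Finset.sum_congr rfl (fun ω _ => ?_)
        rw [Finset.prod_pair hst]
    _ = ∏ u ∈ ({s, t} : Finset (Fin m)), ∑ o, p o * g o := h
    _ = (∑ o, p o * g o) * (∑ o, p o * g o) := Finset.prod_pair hst

/-- The key pointwise second-moment bound. -/
lemma maurey_key (hm : 1 ≤ m) (L : ℝ) (p : Option (Fin M) → ℝ)
    (hp0 : ∀ o, 0 ≤ p o) (hp1 : ∑ o, p o = 1)
    (y : Option (Fin M) → ℝ) (hy : ∀ o, |y o| ≤ L) (c : ℝ) :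
    ∑ ω : Fin m → Option (Fin M),
        (∏ t, p (ω t)) * ((1 / (m : ℝ)) * (∑ t, y (ω t)) - c) ^ 2
      ≤ ((∑ o, p o * y o) - c) ^ 2 + L ^ 2 / m := by
  have hmR : (1 : ℝ) ≤ (m : ℝ) := by exact_mod_cast hm
  have hm0 : (0 : ℝ) < (m : ℝ) := lt_of_lt_of_le one_pos hmR
  have he2L : (∑ o, p o * (y o) ^ 2) ≤ L ^ 2 := by
    calc (∑ o, p o * (y o) ^ 2) ≤ ∑ o, p o * L ^ 2 := by
          refine Finset.sum_le_sum (fun o _ => ?_)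
          have h1 : (y o) ^ 2 ≤ L ^ 2 := by
            have := abs_le.mp (hy o)
            nlinarith [this.1, this.2]
          exact mul_le_mul_of_nonneg_left h1 (hp0 o)
      _ = L ^ 2 := by rw [← Finset.sum_mul, hp1, one_mul]
  set μ : ℝ := ∑ o, p o * y o with hμ
  set e2 : ℝ := ∑ o, p o * (y o) ^ 2 with he2
  -- first moment
  have hB : ∑ ω : Fin m → Option (Fin M), (∏ t, p (ω t)) * (∑ t, y (ω t))
      = (m : ℝ) * μ := by
    calc ∑ ω : Fin m → Option (Fin M), (∏ t, p (ω t)) * (∑ t, y (ω t))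
        = ∑ ω : Fin m → Option (Fin M), ∑ t, (∏ u, p (ω u)) * y (ω t) := by
          refine Finset.sum_congr rfl (fun ω _ => ?_); rw [Finset.mul_sum]
      _ = ∑ t : Fin m, ∑ ω : Fin m → Option (Fin M), (∏ u, p (ω u)) * y (ω t) :=
          Finset.sum_comm
      _ = ∑ _t : Fin m, μ := Finset.sum_congr rfl (fun t _ => maurey_E1 p hp1 t y)
      _ = (m : ℝ) * μ := by simp [mul_comm]
  -- second moment
  have hdiag : ∀ s : Fin m, ∑ ω : Fin m → Option (Fin M),
      (∏ u, p (ω u)) * (y (ω s) * y (ω s)) = e2 := by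
    intro s
    calc ∑ ω : Fin m → Option (Fin M), (∏ u, p (ω u)) * (y (ω s) * y (ω s))
        = ∑ ω : Fin m → Option (Fin M), (∏ u, p (ω u)) * (fun o => y o * y o) (ω s) := rfl
      _ = ∑ o, p o * (y o * y o) := maurey_E1 p hp1 s (fun o => y o * y o)
      _ = e2 := by
          rw [he2]
          exact Finset.sum_congr rfl (fun o _ => by ring)
  have hC : ∑ ω : Fin m → Option (Fin M), (∏ t, p (ω t)) * (∑ t, y (ω t)) ^ 2
      = (m : ℝ) * e2 + ((m : ℝ) ^ 2 - m) * μ ^ 2 := by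
    calc ∑ ω : Fin m → Option (Fin M), (∏ t, p (ω t)) * (∑ t, y (ω t)) ^ 2
        = ∑ ω : Fin m → Option (Fin M), ∑ s : Fin m, ∑ t : Fin m,
            (∏ u, p (ω u)) * (y (ω s) * y (ω t)) := by
          refine Finset.sum_congr rfl (fun ω _ => ?_)
          rw [sq, Finset.sum_mul_sum, Finset.mul_sum]
          refine Finset.sum_congr rfl (fun s _ => ?_)
          rw [Finset.mul_sum]
      _ = ∑ s : Fin m, ∑ ω : Fin m → Option (Fin M), ∑ t : Fin m,
            (∏ u, p (ω u)) * (y (ω s) * y (ω t)) := Finset.sum_comm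
      _ = ∑ s : Fin m, ∑ t : Fin m, ∑ ω : Fin m → Option (Fin M),
            (∏ u, p (ω u)) * (y (ω s) * y (ω t)) :=
          Finset.sum_congr rfl (fun s _ => Finset.sum_comm)
      _ = ∑ s : Fin m, ∑ t : Fin m, (if s = t then e2 else μ ^ 2) := by
          refine Finset.sum_congr rfl (fun s _ => Finset.sum_congr rfl (fun t _ => ?_))
          by_cases hst : s = t
          · rw [if_pos hst, ← hst]
            exact hdiag s
          · rw [if_neg hst]
            calc ∑ ω : Fin m → Option (Fin M), (∏ u, p (ω u)) * (y (ω s) * y (ω t))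
                = μ * μ := maurey_E2 p hp1 hst y
              _ = μ ^ 2 := (sq μ).symm
      _ = (m : ℝ) * e2 + ((m : ℝ) ^ 2 - m) * μ ^ 2 := by
          have hrow : ∀ s : Fin m, (∑ t : Fin m, if s = t then e2 else μ ^ 2)
              = e2 + ((m : ℝ) - 1) * μ ^ 2 := by
            intro s
            have hpt : ∀ t : Fin m, (if s = t then e2 else μ ^ 2)
                = μ ^ 2 + (if s = t then e2 - μ ^ 2 else 0) := by
              intro t; by_cases h : s = t <;> simp [h]
            rw [Finset.sum_congr rfl (fun t _ => hpt t), Finset.sum_add_distrib,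
              Finset.sum_ite_eq, if_pos (Finset.mem_univ s), Finset.sum_const,
              Finset.card_univ, Fintype.card_fin, nsmul_eq_mul]
            ring
          rw [Finset.sum_congr rfl (fun s _ => hrow s), Finset.sum_const,
            Finset.card_univ, Fintype.card_fin, nsmul_eq_mul]
          ring
  have hA : ∑ ω : Fin m → Option (Fin M), (∏ t, p (ω t)) = 1 := maurey_mass p hp1
  -- expand the square
  have hexp : ∑ ω : Fin m → Option (Fin M),
      (∏ t, p (ω t)) * ((1 / (m : ℝ)) * (∑ t, y (ω t)) - c) ^ 2
      = (1 / (m : ℝ)) ^ 2 *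
          (∑ ω : Fin m → Option (Fin M), (∏ t, p (ω t)) * (∑ t, y (ω t)) ^ 2)
        - (2 * c / m) *
          (∑ ω : Fin m → Option (Fin M), (∏ t, p (ω t)) * (∑ t, y (ω t)))
        + c ^ 2 * (∑ ω : Fin m → Option (Fin M), (∏ t, p (ω t))) := by
    rw [Finset.mul_sum, Finset.mul_sum, Finset.mul_sum, ← Finset.sum_sub_distrib,
      ← Finset.sum_add_distrib]
    refine Finset.sum_congr rfl (fun ω _ => ?_)
    ring
  rw [hexp, hA, hB, hC]
  have h1 : (1 / (m : ℝ)) ^ 2 * ((m : ℝ) * e2 + ((m : ℝ) ^ 2 - m) * μ ^ 2)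
      = e2 / m + μ ^ 2 - μ ^ 2 / m := by
    field_simp
    ring
  have h2 : (2 * c / (m : ℝ)) * ((m : ℝ) * μ) = 2 * c * μ := by
    field_simp
  rw [h1, h2]
  have h3 : e2 / (m : ℝ) ≤ L ^ 2 / m := by gcongr
  have h4 : 0 ≤ μ ^ 2 / (m : ℝ) := by positivity
  nlinarith [h3, h4]

end MaureyAux

/-- Lemma B.1 (Maurey argument): for every `λ` in the simplex there is an `m`-sparse
rational convex combination `g = (1/m)∑ k_j f_j` (with `k_j ∈ ℕ`, `∑ k_j ≤ m`) such that
`‖g - f‖_n² ≤ ‖f_λ - f‖_n² + L²/m`. -/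
theorem stmt_10 {𝒳 : Type*} (n M m : ℕ) (hn : 1 ≤ n) (hm : 1 ≤ m) (hM : 1 ≤ M)
    (X : Fin n → 𝒳) (f : 𝒳 → ℝ) (F : Fin M → 𝒳 → ℝ) (L : ℝ)
    (hL : ∀ j, ∀ x, |F j x| ≤ L)
    (lam : Fin M → ℝ) (hlam0 : ∀ j, 0 ≤ lam j) (hlam1 : ∑ j, lam j ≤ 1) :
    ∃ k : Fin M → ℕ, (∑ j, k j) ≤ m ∧
      (1 / (n : ℝ)) * ∑ i, ((1 / (m : ℝ)) * (∑ j, (k j : ℝ) * F j (X i)) - f (X i)) ^ 2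
        ≤ (1 / (n : ℝ)) * ∑ i, ((∑ j, lam j * F j (X i)) - f (X i)) ^ 2 + L ^ 2 / m := by
  classical
  have hL0 : 0 ≤ L := le_trans (abs_nonneg _) (hL ⟨0, hM⟩ (X ⟨0, hn⟩))
  have hnR : (0 : ℝ) < (n : ℝ) := by exact_mod_cast hn
  -- the measure
  set p : Option (Fin M) → ℝ := fun o => Option.elim o (1 - ∑ j, lam j) lam with hp
  have hp0 : ∀ o, 0 ≤ p o := by
    intro o
    cases o with
    | none => simpa [hp] using sub_nonneg.mpr hlam1
    | some j => simpa [hp] using hlam0 j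
  have hp1 : ∑ o, p o = 1 := by
    rw [Fintype.sum_option]
    simp [hp]
  -- the random functions
  set Y : Option (Fin M) → 𝒳 → ℝ := fun o x => Option.elim o 0 (fun j => F j x) with hY
  have hYL : ∀ o x, |Y o x| ≤ L := by
    intro o x
    cases o with
    | none => simpa [hY] using hL0
    | some j => simpa [hY] using hL j x
  have hμ : ∀ x, ∑ o, p o * Y o x = ∑ j, lam j * F j x := by
    intro x
    rw [Fintype.sum_option]
    simp [hp, hY]
  -- weights
  set w : (Fin m → Option (Fin M)) → ℝ := fun ω => ∏ t, p (ω t) with hw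
  have hw0 : ∀ ω, 0 ≤ w ω := fun ω => Finset.prod_nonneg (fun t _ => hp0 (ω t))
  have hw1 : ∑ ω, w ω = 1 := maurey_mass p hp1
  -- the counts
  set kf : (Fin m → Option (Fin M)) → Fin M → ℕ :=
    fun ω j => ∑ t, (if ω t = some j then 1 else 0) with hkf
  have hksum : ∀ ω, ∑ j, kf ω j ≤ m := by
    intro ω
    calc ∑ j, kf ω j = ∑ t : Fin m, ∑ j, (if ω t = some j then 1 else 0) := Finset.sum_comm
      _ ≤ ∑ _t : Fin m, 1 := by
          refine Finset.sum_le_sum (fun t _ => ?_)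
          cases h : ω t with
          | none => simp [h]
          | some j₀ => simp [h, Finset.sum_ite_eq]
      _ = m := by simp
  have hrepr : ∀ ω x, ∑ j, ((kf ω j : ℝ)) * F j x = ∑ t, Y (ω t) x := by
    intro ω x
    calc ∑ j, ((kf ω j : ℝ)) * F j x
        = ∑ j, ∑ t, (if ω t = some j then F j x else 0) := by
          refine Finset.sum_congr rfl (fun j _ => ?_)
          rw [hkf]
          push_cast
          rw [Finset.sum_mul]
          refine Finset.sum_congr rfl (fun t _ => ?_)
          by_cases h : ω t = some j <;> simp [h]
      _ = ∑ t, ∑ j, (if ω t = some j then F j x else 0) := Finset.sum_comm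
      _ = ∑ t, Y (ω t) x := by
          refine Finset.sum_congr rfl (fun t _ => ?_)
          cases h : ω t with
          | none => simp [h, hY]
          | some j₀ => simp [h, Finset.sum_ite_eq, hY]
  -- expectation bound, per sample point
  have hkey : ∀ i : Fin n,
      ∑ ω : Fin m → Option (Fin M),
          (∏ t, p (ω t)) * ((1 / (m : ℝ)) * (∑ t, Y (ω t) (X i)) - f (X i)) ^ 2
        ≤ ((∑ j, lam j * F j (X i)) - f (X i)) ^ 2 + L ^ 2 / m := by
    intro i
    have := maurey_key (m := m) hm L p hp0 hp1 (fun o => Y o (X i))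
      (fun o => hYL o (X i)) (f (X i))
    rwa [hμ (X i)] at this
  -- expectation of the full quantity
  have hEQ : ∑ ω : Fin m → Option (Fin M), (∏ t, p (ω t)) *
        ((1 / (n : ℝ)) * ∑ i, ((1 / (m : ℝ)) * (∑ t, Y (ω t) (X i)) - f (X i)) ^ 2)
      ≤ (1 / (n : ℝ)) * ∑ i, ((∑ j, lam j * F j (X i)) - f (X i)) ^ 2 + L ^ 2 / m := by
    calc ∑ ω : Fin m → Option (Fin M), (∏ t, p (ω t)) *
          ((1 / (n : ℝ)) * ∑ i, ((1 / (m : ℝ)) * (∑ t, Y (ω t) (X i)) - f (X i)) ^ 2)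
        = (1 / (n : ℝ)) * ∑ ω : Fin m → Option (Fin M), ∑ i,
            (∏ t, p (ω t)) * ((1 / (m : ℝ)) * (∑ t, Y (ω t) (X i)) - f (X i)) ^ 2 := by
          rw [Finset.mul_sum]
          refine Finset.sum_congr rfl (fun ω _ => ?_)
          rw [← Finset.mul_sum, mul_left_comm]
      _ = (1 / (n : ℝ)) * ∑ i, ∑ ω : Fin m → Option (Fin M),
            (∏ t, p (ω t)) * ((1 / (m : ℝ)) * (∑ t, Y (ω t) (X i)) - f (X i)) ^ 2 := by
          rw [Finset.sum_comm]
      _ ≤ (1 / (n : ℝ)) * ∑ i, (((∑ j, lam j * F j (X i)) - f (X i)) ^ 2 + L ^ 2 / m) := by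
          refine mul_le_mul_of_nonneg_left (Finset.sum_le_sum (fun i _ => hkey i)) ?_
          positivity
      _ = (1 / (n : ℝ)) * ∑ i, ((∑ j, lam j * F j (X i)) - f (X i)) ^ 2 + L ^ 2 / m := by
          rw [Finset.sum_add_distrib, Finset.sum_const, Finset.card_univ, Fintype.card_fin,
            mul_add, nsmul_eq_mul]
          congr 1
          field_simp
  -- existence of a good ω
  have hex : ∃ ω : Fin m → Option (Fin M),
      (1 / (n : ℝ)) * ∑ i, ((1 / (m : ℝ)) * (∑ t, Y (ω t) (X i)) - f (X i)) ^ 2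
        ≤ (1 / (n : ℝ)) * ∑ i, ((∑ j, lam j * F j (X i)) - f (X i)) ^ 2 + L ^ 2 / m := by
    by_contra hcon
    push_neg at hcon
    have hpos : ∃ ω : Fin m → Option (Fin M), 0 < ∏ t, p (ω t) := by
      by_contra h'
      push_neg at h'
      have hz : ∀ ω : Fin m → Option (Fin M), (∏ t, p (ω t)) = 0 :=
        fun ω => le_antisymm (h' ω) (hw0 ω)
      have : (1 : ℝ) = 0 := by rw [← hw1]; exact Finset.sum_eq_zero (fun ω _ => hz ω)
      norm_num at this
    obtain ⟨ω₀, hω₀⟩ := hpos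
    set R : ℝ := (1 / (n : ℝ)) * ∑ i, ((∑ j, lam j * F j (X i)) - f (X i)) ^ 2 + L ^ 2 / m
      with hRdef
    have hlt : ∑ ω : Fin m → Option (Fin M), (∏ t, p (ω t)) * R
        < ∑ ω : Fin m → Option (Fin M), (∏ t, p (ω t)) *
            ((1 / (n : ℝ)) * ∑ i, ((1 / (m : ℝ)) * (∑ t, Y (ω t) (X i)) - f (X i)) ^ 2) := by
      refine Finset.sum_lt_sum
        (fun ω _ => mul_le_mul_of_nonneg_left (hcon ω).le (hw0 ω))
        ⟨ω₀, Finset.mem_univ _, mul_lt_mul_of_pos_left (hcon ω₀) hω₀⟩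
    have hRsum : ∑ ω : Fin m → Option (Fin M), (∏ t, p (ω t)) * R = R := by
      rw [← Finset.sum_mul, hw1, one_mul]
    rw [hRsum] at hlt
    exact absurd hEQ (not_le.mpr hlt)
  obtain ⟨ω, hω⟩ := hex
  refine ⟨kf ω, hksum ω, ?_⟩
  have hrw : (1 / (n : ℝ)) * ∑ i, ((1 / (m : ℝ)) * (∑ j, ((kf ω j : ℝ)) * F j (X i))
        - f (X i)) ^ 2
      = (1 / (n : ℝ)) * ∑ i, ((1 / (m : ℝ)) * (∑ t, Y (ω t) (X i)) - f (X i)) ^ 2 := by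
    congr 1
    exact Finset.sum_congr rfl (fun i _ => by rw [hrepr ω (X i)])
  rw [hrw]
  exact hω
end
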